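/- Suppose 𝒜 satisfies the RIP with constant δ ∈ (0,1). Then for all u ∈ ℝ^{n1} and v ∈ ℝ^{n2} one has ‖(𝒪*𝒪 − 𝒫_𝒪)(uvᵀ)‖ ≤ δ·‖uvᵀ‖_F, where ‖·‖ on the left denotes the spectral (operator) norm of the matrix and 𝒫_𝒪 : ℝ^{n1×n2} → ℝ^{n1×n2} is the orthogonal projection 𝒫_𝒪(Z) = u_⋆u_⋆ᵀ Z (I − v_⋆v_⋆ᵀ) + (I − u_⋆u_⋆ᵀ) Z v_⋆v_⋆ᵀ. -/

import Mathlib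

open MeasureTheory ProbabilityTheory Matrix Finset
open scoped BigOperators ENNReal NNReal RealInnerProductSpace

noncomputable section

namespace ALSPaper

/-- View a plain vector as an element of Euclidean space. -/
def toE {n : ℕ} (x : Fin n → ℝ) : EuclideanSpace ℝ (Fin n) :=
  (WithLp.equiv 2 (Fin n → ℝ)).symm x

/-- View an element of Euclidean space as a plain vector. -/
def ofE {n : ℕ} (x : EuclideanSpace ℝ (Fin n)) : Fin n → ℝ :=
  WithLp.equiv 2 (Fin n → ℝ) x

/-- The first standard basis vector. -/
def e1 (n : ℕ) : EuclideanSpace ℝ (Fin n) :=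
  toE fun i => if (i : ℕ) = 0 then 1 else 0

/-- Frobenius inner product. -/
def frobInner {n1 n2 : ℕ} (A B : Matrix (Fin n1) (Fin n2) ℝ) : ℝ :=
  ∑ i, ∑ j, A i j * B i j

/-- Frobenius norm. -/
def frobNorm {n1 n2 : ℕ} (A : Matrix (Fin n1) (Fin n2) ℝ) : ℝ :=
  Real.sqrt (frobInner A A)

/-- The measurement operator. -/
def calA {n1 n2 m : ℕ} (A : Fin m → Matrix (Fin n1) (Fin n2) ℝ)
    (X : Matrix (Fin n1) (Fin n2) ℝ) : EuclideanSpace ℝ (Fin m) :=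
  toE fun i => (Real.sqrt m)⁻¹ * frobInner (A i) X

/-- The adjoint of the measurement operator. -/
def calAdj {n1 n2 m : ℕ} (A : Fin m → Matrix (Fin n1) (Fin n2) ℝ)
    (w : EuclideanSpace ℝ (Fin m)) : Matrix (Fin n1) (Fin n2) ℝ :=
  ∑ i, ((Real.sqrt m)⁻¹ * ofE w i) • A i

/-- The restricted isometry property (RIP) with constant `δ` (for rank ≤ 4). -/
def HasRIP {n1 n2 m : ℕ} (A : Fin m → Matrix (Fin n1) (Fin n2) ℝ) (δ : ℝ) : Prop :=
  ∀ Z : Matrix (Fin n1) (Fin n2) ℝ, Z.rank ≤ 4 →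
    (1 - δ) * frobNorm Z ^ 2 ≤ ‖calA A Z‖ ^ 2 ∧ ‖calA A Z‖ ^ 2 ≤ (1 + δ) * frobNorm Z ^ 2

/-- Component of `v` parallel to the first standard basis vector. -/
def par {n : ℕ} (v : EuclideanSpace ℝ (Fin n)) : EuclideanSpace ℝ (Fin n) :=
  ⟪e1 n, v⟫ • e1 n

/-- Component of `v` orthogonal to the first standard basis vector. -/
def perp {n : ℕ} (v : EuclideanSpace ℝ (Fin n)) : EuclideanSpace ℝ (Fin n) :=
  v - par v

/-- The "diagonal block" part of a measurement matrix. -/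
def Dmat {n1 n2 : ℕ} (A : Matrix (Fin n1) (Fin n2) ℝ) : Matrix (Fin n1) (Fin n2) ℝ :=
  vecMulVec (ofE (e1 n1)) (ofE (e1 n1)) * A * vecMulVec (ofE (e1 n2)) (ofE (e1 n2))
    + (1 - vecMulVec (ofE (e1 n1)) (ofE (e1 n1))) * A *
        (1 - vecMulVec (ofE (e1 n2)) (ofE (e1 n2)))

/-- The "off-diagonal block" part of a measurement matrix. -/
def Omat {n1 n2 : ℕ} (A : Matrix (Fin n1) (Fin n2) ℝ) : Matrix (Fin n1) (Fin n2) ℝ :=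
  vecMulVec (ofE (e1 n1)) (ofE (e1 n1)) * A * (1 - vecMulVec (ofE (e1 n2)) (ofE (e1 n2)))
    + (1 - vecMulVec (ofE (e1 n1)) (ofE (e1 n1))) * A * vecMulVec (ofE (e1 n2)) (ofE (e1 n2))

/-- The (1,1) entry of a matrix. -/
def ent11 {n1 n2 : ℕ} (A : Matrix (Fin n1) (Fin n2) ℝ) : ℝ :=
  frobInner (vecMulVec (ofE (e1 n1)) (ofE (e1 n2))) A

/-- Spectral (operator) norm of a matrix. -/
def specNorm {n1 n2 : ℕ} (M : Matrix (Fin n1) (Fin n2) ℝ) : ℝ :=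
  ‖LinearMap.toContinuousLinearMap (Matrix.toEuclideanLin M)‖

/-- The normal equation for the least-squares update. -/
def NormalEq {n1 n2 m : ℕ} (A : Fin m → Matrix (Fin n1) (Fin n2) ℝ)
    (u : EuclideanSpace ℝ (Fin n1)) (v : EuclideanSpace ℝ (Fin n2)) : Prop :=
  u = ⟪v, e1 n2⟫ • e1 n1 +
    toE (((vecMulVec (ofE u) (ofE v) - vecMulVec (ofE (e1 n1)) (ofE (e1 n2))) -
      calAdj A (calA A (vecMulVec (ofE u) (ofE v) - vecMulVec (ofE (e1 n1)) (ofE (e1 n2)))))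
        *ᵥ ofE v)

/-- sin of the angle between two vectors. -/
def sinAngle {n : ℕ} (a b : EuclideanSpace ℝ (Fin n)) : ℝ :=
  Real.sqrt (1 - ⟪a, b⟫ ^ 2 / (‖a‖ ^ 2 * ‖b‖ ^ 2))

/-- `c_t` sequence. -/
def cseq (n2 t : ℕ) : ℝ := (1 + 1 / Real.log n2) ^ t - 1

/-- ALS iterates. -/
def IsALS {n1 n2 m : ℕ} (A : Fin m → Matrix (Fin n1) (Fin n2) ℝ)
    (y : EuclideanSpace ℝ (Fin m)) (v0 : EuclideanSpace ℝ (Fin n2))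
    (u : ℕ → EuclideanSpace ℝ (Fin n1)) (v : ℕ → EuclideanSpace ℝ (Fin n2))
    (uh : ℕ → EuclideanSpace ℝ (Fin n1)) (vh : ℕ → EuclideanSpace ℝ (Fin n2)) : Prop :=
  v 0 = v0 ∧
  ∀ t : ℕ,
    (∀ u' : EuclideanSpace ℝ (Fin n1),
      ‖y - calA A (vecMulVec (ofE (uh t)) (ofE (v t)))‖ ≤
        ‖y - calA A (vecMulVec (ofE u') (ofE (v t)))‖) ∧
    u (t + 1) = ‖uh t‖⁻¹ • uh t ∧
    (∀ v' : EuclideanSpace ℝ (Fin n2),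
      ‖y - calA A (vecMulVec (ofE (u (t + 1))) (ofE (vh t)))‖ ≤
        ‖y - calA A (vecMulVec (ofE (u (t + 1))) (ofE v'))‖) ∧
    v (t + 1) = ‖vh t‖⁻¹ • vh t

/-- The orthogonal projection `𝒫_𝒪` onto the "off-diagonal blocks". -/
def POproj {n1 n2 : ℕ} (Z : Matrix (Fin n1) (Fin n2) ℝ) : Matrix (Fin n1) (Fin n2) ℝ :=
  vecMulVec (ofE (e1 n1)) (ofE (e1 n1)) * Z * (1 - vecMulVec (ofE (e1 n2)) (ofE (e1 n2)))
    + (1 - vecMulVec (ofE (e1 n1)) (ofE (e1 n1))) * Z * vecMulVec (ofE (e1 n2)) (ofE (e1 n2))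


/-!
Write `M = uvᵀ` and `B = (𝒪*𝒪 - 𝒫_𝒪) M`. Since `𝒪 = 𝒜 ∘ 𝒫_𝒪` and `𝒫_𝒪` is a self-adjoint
idempotent, `⟨xyᵀ, B⟩ = ⟨𝒜(𝒫_𝒪 xyᵀ), 𝒜(𝒫_𝒪 M)⟩ - ⟨𝒫_𝒪 xyᵀ, 𝒫_𝒪 M⟩` for all vectors `x, y`.
Both `𝒫_𝒪 xyᵀ` and `𝒫_𝒪 M` have rank at most two, so every matrix in their span has rank at most
four, and polarizing the RIP on that span bounds the right-hand side by
`δ ‖𝒫_𝒪 xyᵀ‖_F ‖𝒫_𝒪 M‖_F ≤ δ ‖x‖ ‖y‖ ‖M‖_F`. Taking the supremum over unit `x, y` bounds the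
spectral norm of `B`.
-/

section Rank

variable {K : Type*} [Field K] {ι κ : Type*} [Fintype κ]

theorem _root_.Matrix.rank_add_le (X Y : Matrix ι κ K) : (X + Y).rank ≤ X.rank + Y.rank := by
  rw [Matrix.rank, Matrix.rank, Matrix.rank, Matrix.mulVecLin_add]
  exact (Submodule.finrank_mono (LinearMap.range_add_le _ _)).trans
    (Submodule.finrank_add_le_finrank_add_finrank _ _)

theorem _root_.Matrix.rank_smul_le [Finite ι] (c : K) (X : Matrix ι κ K) :
    (c • X).rank ≤ X.rank := by
  rw [Matrix.rank, Matrix.rank, Matrix.mulVecLin, map_smul]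
  exact Submodule.finrank_mono (LinearMap.range_smul_le_range _ _)

theorem _root_.Matrix.rank_le_of_mem_span_pair [Finite ι] {X Y Z : Matrix ι κ K}
    (hZ : Z ∈ Submodule.span K {X, Y}) : Z.rank ≤ X.rank + Y.rank := by
  obtain ⟨a, b, rfl⟩ := Submodule.mem_span_pair.1 hZ
  exact (Matrix.rank_add_le _ _).trans
    (add_le_add (Matrix.rank_smul_le _ _) (Matrix.rank_smul_le _ _))

end Rank

section InnerProductSpace

variable {E F G : Type*} [NormedAddCommGroup F] [InnerProductSpace ℝ F]
  [NormedAddCommGroup G] [InnerProductSpace ℝ G]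

theorem _root_.ContinuousLinearMap.opNorm_le_of_inner_le [NormedAddCommGroup E]
    [InnerProductSpace ℝ E] (T : E →L[ℝ] F) {C : ℝ} (hC : 0 ≤ C)
    (h : ∀ x y, ⟪x, T y⟫ ≤ C * (‖x‖ * ‖y‖)) : ‖T‖ ≤ C := by
  refine T.opNorm_le_bound hC fun y => ?_
  have hy := h (T y) y
  rw [real_inner_self_eq_norm_sq] at hy
  rcases (norm_nonneg (T y)).eq_or_lt with h0 | hpos
  · rw [← h0]
    positivity
  · nlinarith

theorem abs_inner_sub_inner_le_of_forall_mem_span [AddCommGroup E] [Module ℝ E]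
    (T : E →ₗ[ℝ] F) (g : E →ₗ[ℝ] G) {δ : ℝ} {x y : E}
    (h : ∀ z ∈ Submodule.span ℝ {x, y}, |‖T z‖ ^ 2 - ‖g z‖ ^ 2| ≤ δ * ‖g z‖ ^ 2) :
    |⟪T x, T y⟫ - ⟪g x, g y⟫| ≤ δ * (‖g x‖ * ‖g y‖) := by
  have hx : x ∈ Submodule.span ℝ {x, y} := Submodule.subset_span (by simp)
  have hy : y ∈ Submodule.span ℝ {x, y} := Submodule.subset_span (by simp)
  have map_eq_zero : ∀ z ∈ Submodule.span ℝ {x, y}, g z = 0 → T z = 0 := fun z hz hgz => by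
    simpa [hgz] using h z hz
  by_cases hgx : g x = 0
  · simp [hgx, map_eq_zero x hx hgx]
  by_cases hgy : g y = 0
  · simp [hgy, map_eq_zero y hy hgy]
  set a := ‖g x‖
  set b := ‖g y‖
  have hab : 0 < a * b := mul_pos (norm_pos_iff.2 hgx) (norm_pos_iff.2 hgy)
  -- polarize along `b • x ± a • y`, whose two summands both have `g`-norm `a * b`
  have hp := h (b • x + a • y) (add_mem (Submodule.smul_mem _ _ hx) (Submodule.smul_mem _ _ hy))
  have hm := h (b • x - a • y) (sub_mem (Submodule.smul_mem _ _ hx) (Submodule.smul_mem _ _ hy))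
  have polarT : ‖T (b • x + a • y)‖ ^ 2 - ‖T (b • x - a • y)‖ ^ 2 = 4 * (a * b) * ⟪T x, T y⟫ := by
    rw [map_add, map_sub, map_smul, map_smul, norm_add_sq_real, norm_sub_sq_real,
      real_inner_smul_left, real_inner_smul_right]
    ring
  have polarG : ‖g (b • x + a • y)‖ ^ 2 - ‖g (b • x - a • y)‖ ^ 2 = 4 * (a * b) * ⟪g x, g y⟫ := by
    rw [map_add, map_sub, map_smul, map_smul, norm_add_sq_real, norm_sub_sq_real,
      real_inner_smul_left, real_inner_smul_right]
    ring
  have parallelogram : ‖g (b • x + a • y)‖ ^ 2 + ‖g (b • x - a • y)‖ ^ 2 = 4 * (a * b) ^ 2 := by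
    rw [map_add, map_sub, map_smul, map_smul, norm_add_sq_real, norm_sub_sq_real, norm_smul,
      norm_smul, Real.norm_of_nonneg (norm_nonneg _), Real.norm_of_nonneg (norm_nonneg _)]
    ring
  have key : 4 * (a * b) * |⟪T x, T y⟫ - ⟪g x, g y⟫| ≤ 4 * (a * b) * (δ * (a * b)) :=
    calc 4 * (a * b) * |⟪T x, T y⟫ - ⟪g x, g y⟫|
        = |(‖T (b • x + a • y)‖ ^ 2 - ‖g (b • x + a • y)‖ ^ 2)
            - (‖T (b • x - a • y)‖ ^ 2 - ‖g (b • x - a • y)‖ ^ 2)| := by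
          rw [← abs_of_pos (by positivity : 0 < 4 * (a * b)), ← abs_mul]
          congr 1
          linear_combination polarG - polarT
      _ ≤ δ * ‖g (b • x + a • y)‖ ^ 2 + δ * ‖g (b • x - a • y)‖ ^ 2 :=
          (abs_sub _ _).trans (add_le_add hp hm)
      _ = 4 * (a * b) * (δ * (a * b)) := by rw [← mul_add, parallelogram]; ring
  exact le_of_mul_le_mul_left key (by positivity)

end InnerProductSpace

variable {n1 n2 m : ℕ}

def flatten : Matrix (Fin n1) (Fin n2) ℝ →ₗ[ℝ] EuclideanSpace ℝ (Fin n1 × Fin n2) where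
  toFun X := WithLp.toLp 2 fun p => X p.1 p.2
  map_add' _ _ := rfl
  map_smul' _ _ := rfl

theorem frobInner_eq_inner (X Y : Matrix (Fin n1) (Fin n2) ℝ) :
    frobInner X Y = ⟪flatten X, flatten Y⟫ := by
  simp only [frobInner, flatten, PiLp.inner_apply, RCLike.inner_apply, Real.ringHom_apply, mul_comm,
    Fintype.sum_prod_type]
  rfl

theorem frobInner_comm (X Y : Matrix (Fin n1) (Fin n2) ℝ) : frobInner X Y = frobInner Y X := by
  rw [frobInner_eq_inner, frobInner_eq_inner, real_inner_comm]

theorem frobNorm_eq_norm (X : Matrix (Fin n1) (Fin n2) ℝ) : frobNorm X = ‖flatten X‖ := by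
  rw [frobNorm, frobInner_eq_inner, real_inner_self_eq_norm_sq, Real.sqrt_sq (norm_nonneg _)]

def calALin (A : Fin m → Matrix (Fin n1) (Fin n2) ℝ) :
    Matrix (Fin n1) (Fin n2) ℝ →ₗ[ℝ] EuclideanSpace ℝ (Fin m) where
  toFun := calA A
  map_add' X Y := by
    ext i
    simp only [calA, toE, frobInner_eq_inner, map_add, inner_add_right, WithLp.equiv_symm_apply,
      PiLp.add_apply]
    ring
  map_smul' c X := by
    ext i
    simp only [calA, toE, frobInner_eq_inner, map_smul, inner_smul_right, WithLp.equiv_symm_apply,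
      Real.ringHom_apply, PiLp.smul_apply, smul_eq_mul]
    ring

theorem frobInner_calAdj (A : Fin m → Matrix (Fin n1) (Fin n2) ℝ) (N : Matrix (Fin n1) (Fin n2) ℝ)
    (w : EuclideanSpace ℝ (Fin m)) : frobInner N (calAdj A w) = ⟪calA A N, w⟫ := by
  rw [frobInner_eq_inner, calAdj, map_sum, inner_sum, PiLp.inner_apply]
  refine Finset.sum_congr rfl fun i _ => ?_
  rw [map_smul, real_inner_smul_right, ← frobInner_eq_inner, frobInner_comm]
  simp only [ofE, WithLp.equiv_apply, calA, toE, WithLp.equiv_symm_apply, RCLike.inner_apply,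
    Real.ringHom_apply]
  ring

theorem inner_toEuclideanLin (B : Matrix (Fin n1) (Fin n2) ℝ) (x : EuclideanSpace ℝ (Fin n1))
    (y : EuclideanSpace ℝ (Fin n2)) :
    ⟪x, Matrix.toEuclideanLin B y⟫ = frobInner (vecMulVec (ofE x) (ofE y)) B := by
  simp only [PiLp.inner_apply, Matrix.ofLp_toLpLin, Matrix.toLin'_apply, Matrix.mulVec, dotProduct,
    RCLike.inner_apply, conj_trivial, Finset.sum_mul]
  exact Finset.sum_congr rfl fun i _ => Finset.sum_congr rfl fun j _ => by
    simp only [vecMulVec_apply, ofE, WithLp.equiv_apply]; ring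

theorem frobNorm_vecMulVec (x : EuclideanSpace ℝ (Fin n1)) (y : EuclideanSpace ℝ (Fin n2)) :
    frobNorm (vecMulVec (ofE x) (ofE y)) = ‖x‖ * ‖y‖ := by
  have : frobInner (vecMulVec (ofE x) (ofE y)) (vecMulVec (ofE x) (ofE y)) = ‖x‖ ^ 2 * ‖y‖ ^ 2 := by
    rw [EuclideanSpace.real_norm_sq_eq, EuclideanSpace.real_norm_sq_eq, Finset.sum_mul_sum]
    exact Finset.sum_congr rfl fun i _ => Finset.sum_congr rfl fun j _ => by
      simp only [vecMulVec_apply, ofE, WithLp.equiv_apply]; ring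
  rw [frobNorm, this, ← mul_pow, Real.sqrt_sq (by positivity)]

theorem POproj_apply (Z : Matrix (Fin n1) (Fin n2) ℝ) (i : Fin n1) (j : Fin n2) :
    POproj Z i j = if ((i : ℕ) = 0 ↔ (j : ℕ) = 0) then 0 else Z i j := by
  obtain ⟨k1, rfl⟩ := Nat.exists_eq_add_one_of_ne_zero i.pos.ne'
  obtain ⟨k2, rfl⟩ := Nat.exists_eq_add_one_of_ne_zero j.pos.ne'
  simp only [POproj, ofE, e1, toE, Fin.val_eq_zero_iff, WithLp.equiv_symm_apply,
    WithLp.equiv_apply, Matrix.mul_sub, Matrix.mul_one, Matrix.sub_mul, Matrix.one_mul,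
    Matrix.add_apply, Matrix.sub_apply, Matrix.mul_apply, vecMulVec_apply, mul_ite, mul_one,
    mul_zero, ite_mul, one_mul, zero_mul, Finset.sum_ite_eq', Finset.mem_univ, if_true,
    Finset.sum_ite_irrel, Finset.sum_const_zero]
  split_ifs <;> simp_all

theorem POproj_POproj (Z : Matrix (Fin n1) (Fin n2) ℝ) : POproj (POproj Z) = POproj Z := by
  ext i j
  simp only [POproj_apply]
  split_ifs <;> rfl

theorem frobInner_POproj_left (X Y : Matrix (Fin n1) (Fin n2) ℝ) :
    frobInner (POproj X) Y = frobInner X (POproj Y) :=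
  Finset.sum_congr rfl fun i _ => Finset.sum_congr rfl fun j _ => by
    rw [POproj_apply, POproj_apply]
    split_ifs <;> ring

theorem frobNorm_POproj_le (Z : Matrix (Fin n1) (Fin n2) ℝ) : frobNorm (POproj Z) ≤ frobNorm Z :=
  Real.sqrt_le_sqrt <| Finset.sum_le_sum fun i _ => Finset.sum_le_sum fun j _ => by
    rw [POproj_apply]
    split_ifs
    · simpa using mul_self_nonneg (Z i j)
    · rfl

theorem rank_POproj_le (Z : Matrix (Fin n1) (Fin n2) ℝ) : (POproj Z).rank ≤ 2 * Z.rank := by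
  rw [POproj, two_mul]
  exact (Matrix.rank_add_le _ _).trans <| add_le_add
    ((Matrix.rank_mul_le_left _ _).trans (Matrix.rank_mul_le_right _ _))
    ((Matrix.rank_mul_le_left _ _).trans (Matrix.rank_mul_le_right _ _))

theorem calA_Omat (A : Fin m → Matrix (Fin n1) (Fin n2) ℝ) (X : Matrix (Fin n1) (Fin n2) ℝ) :
    calA (fun i => Omat (A i)) X = calA A (POproj X) := by
  simp only [calA]
  congr 2 with i
  exact congrArg _ (frobInner_POproj_left (A i) X)

theorem HasRIP.abs_inner_calA_sub_frobInner_le {A : Fin m → Matrix (Fin n1) (Fin n2) ℝ} {δ : ℝ}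
    (hRIP : HasRIP A δ) {X Y : Matrix (Fin n1) (Fin n2) ℝ} (hX : X.rank ≤ 2) (hY : Y.rank ≤ 2) :
    |⟪calA A X, calA A Y⟫ - frobInner X Y| ≤ δ * (frobNorm X * frobNorm Y) := by
  rw [frobInner_eq_inner, frobNorm_eq_norm, frobNorm_eq_norm]
  refine abs_inner_sub_inner_le_of_forall_mem_span (calALin A) flatten fun Z hZ => ?_
  obtain ⟨hlow, hupp⟩ := hRIP Z ((Matrix.rank_le_of_mem_span_pair hZ).trans (by omega))
  rw [frobNorm_eq_norm] at hlow hupp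
  change |‖calA A Z‖ ^ 2 - _| ≤ _
  exact abs_le.2 ⟨by linarith, by linarith⟩

theorem frobInner_offDiag_sub_POproj (A : Fin m → Matrix (Fin n1) (Fin n2) ℝ)
    (N M : Matrix (Fin n1) (Fin n2) ℝ) :
    frobInner N (calAdj (fun i => Omat (A i)) (calA (fun i => Omat (A i)) M) - POproj M)
      = ⟪calA A (POproj N), calA A (POproj M)⟫ - frobInner (POproj N) (POproj M) := by
  rw [frobInner_eq_inner, map_sub, inner_sub_right, ← frobInner_eq_inner, ← frobInner_eq_inner,
    frobInner_calAdj, calA_Omat, calA_Omat, frobInner_POproj_left, POproj_POproj]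

theorem frobInner_offDiag_sub_POproj_le {A : Fin m → Matrix (Fin n1) (Fin n2) ℝ} {δ : ℝ}
    (hRIP : HasRIP A δ) (hδ : 0 ≤ δ) {N M : Matrix (Fin n1) (Fin n2) ℝ} (hN : N.rank ≤ 1)
    (hM : M.rank ≤ 1) :
    frobInner N (calAdj (fun i => Omat (A i)) (calA (fun i => Omat (A i)) M) - POproj M)
      ≤ δ * (frobNorm N * frobNorm M) :=
  calc _ = ⟪calA A (POproj N), calA A (POproj M)⟫ - frobInner (POproj N) (POproj M) :=
        frobInner_offDiag_sub_POproj A N M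
    _ ≤ δ * (frobNorm (POproj N) * frobNorm (POproj M)) :=
        (le_abs_self _).trans <| hRIP.abs_inner_calA_sub_frobInner_le
          ((rank_POproj_le N).trans (by omega)) ((rank_POproj_le M).trans (by omega))
    _ ≤ δ * (frobNorm N * frobNorm M) :=
        mul_le_mul_of_nonneg_left (mul_le_mul (frobNorm_POproj_le N) (frobNorm_POproj_le M)
          (Real.sqrt_nonneg _) (Real.sqrt_nonneg _)) hδ

theorem specNorm_le_of_frobInner_vecMulVec_le {B : Matrix (Fin n1) (Fin n2) ℝ} {C : ℝ}
    (hC : 0 ≤ C)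
    (h : ∀ x y, frobInner (vecMulVec (ofE x) (ofE y)) B ≤ C * frobNorm (vecMulVec (ofE x) (ofE y))) :
    specNorm B ≤ C :=
  ContinuousLinearMap.opNorm_le_of_inner_le _ hC fun x y => by
    simpa only [LinearMap.coe_toContinuousLinearMap', inner_toEuclideanLin, frobNorm_vecMulVec]
      using h x y

theorem statement2_general {n1 n2 m : ℕ} (A : Fin m → Matrix (Fin n1) (Fin n2) ℝ) (δ : ℝ)
    (hδ0 : 0 < δ) (hRIP : HasRIP A δ)
    (u : EuclideanSpace ℝ (Fin n1)) (v : EuclideanSpace ℝ (Fin n2)) :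
    specNorm (calAdj (fun i => Omat (A i))
        (calA (fun i => Omat (A i)) (vecMulVec (ofE u) (ofE v)))
      - POproj (vecMulVec (ofE u) (ofE v)))
      ≤ δ * frobNorm (vecMulVec (ofE u) (ofE v)) := by
  refine specNorm_le_of_frobInner_vecMulVec_le
    (mul_nonneg hδ0.le (Real.sqrt_nonneg _)) fun x y => ?_
  calc _ ≤ δ * (frobNorm (vecMulVec (ofE x) (ofE y)) * frobNorm (vecMulVec (ofE u) (ofE v))) :=
        frobInner_offDiag_sub_POproj_le hRIP hδ0.le (Matrix.rank_vecMulVec_le _ _)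
          (Matrix.rank_vecMulVec_le _ _)
    _ = _ := by ring

/-- If `𝒜` satisfies the RIP with constant `δ ∈ (0,1)`, then for all `u, v` one has
`‖(𝒪*𝒪 − 𝒫_𝒪)(uvᵀ)‖ ≤ δ‖uvᵀ‖_F` in the spectral norm. -/
theorem statement2 {n1 n2 m : ℕ} (A : Fin m → Matrix (Fin n1) (Fin n2) ℝ) (δ : ℝ)
    (hδ0 : 0 < δ) (hδ1 : δ < 1) (hRIP : HasRIP A δ)
    (u : EuclideanSpace ℝ (Fin n1)) (v : EuclideanSpace ℝ (Fin n2)) :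
    specNorm (calAdj (fun i => Omat (A i))
        (calA (fun i => Omat (A i)) (vecMulVec (ofE u) (ofE v)))
      - POproj (vecMulVec (ofE u) (ofE v)))
      ≤ δ * frobNorm (vecMulVec (ofE u) (ofE v)) :=
  statement2_general A δ hδ0 hRIP u v

end ALSPaper
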